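/- arXiv:2401.16095 — 2 statements merged into one kernel-verified Lean document; each statement's English description precedes it below -/
import Mathlib

section
/- For every linear set L ⊆ ℤ^n with representation (b, P), every k ∈ ℕ, and every word w ∈ K^k(L), the effect satisfies Δ(w) ∈ L. -/
set_option linter.unusedVariables false

/-! ### Alphabet, effects, Dyck languages -/

abbrev Sig (n : ℕ) := Fin n × Bool

def letterEff {n : ℕ} (a : Sig n) : Fin n → ℤ :=
  fun j => if j = a.1 then (if a.2 then 1 else -1) else 0

def wordEff {n : ℕ} (w : List (Sig n)) : Fin n → ℤ :=
  (w.map letterEff).sum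

/-- The Dyck language `D_n`. -/
def Dyck (n : ℕ) : Language (Sig n) :=
  {w | wordEff w = 0 ∧ ∀ u, u <+: w → ∀ j, 0 ≤ wordEff u j}

/-- The coverability Dyck language `D_n^↑`. -/
def CovDyck (n : ℕ) : Language (Sig n) :=
  {w | ∀ u, u <+: w → ∀ j, 0 ≤ wordEff u j}

/-- The `ℤ`-Dyck language `D_n^ℤ`. -/
def ZDyck (n : ℕ) : Language (Sig n) :=
  {w | wordEff w = 0}

/-! ### VASS -/

structure VASS (A : Type) where
  Q : Type
  C : Type
  finQ : Finite Q
  finC : Finite C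
  E : Set (Q × Option A × (C → ℤ) × Q)
  finE : E.Finite

inductive VASS.NRun {A : Type} (V : VASS A) :
    (V.Q × (V.C → ℕ)) → List A → (V.Q × (V.C → ℕ)) → Prop
  | refl (cfg : V.Q × (V.C → ℕ)) : VASS.NRun V cfg [] cfg
  | step {q : V.Q} {c : V.C → ℕ} {a : Option A} {d : V.C → ℤ} {q' : V.Q}
      {c' : V.C → ℕ} {w : List A} {last : V.Q × (V.C → ℕ)} :
      (q, a, d, q') ∈ V.E →
      (∀ j, (c' j : ℤ) = (c j : ℤ) + d j) →
      VASS.NRun V (q', c') w last →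
      VASS.NRun V (q, c) (a.toList ++ w) last

/-- An initialized VASS: generalized initial/final configurations,
with `none` playing the role of `ω`. -/
structure InitVASS (A : Type) extends VASS A where
  qin : Q
  qout : Q
  cin : C → Option ℕ
  cout : C → Option ℕ

/-- The reachability language of an initialized VASS. -/
def InitVASS.lang {A : Type} (V : InitVASS A) : Language A :=
  {w | ∃ c0 cl : V.C → ℕ,
      V.toVASS.NRun (V.qin, c0) w (V.qout, cl) ∧
      (∀ j m, V.cin j = some m → c0 j = m) ∧
      (∀ j m, V.cout j = some m → cl j = m)}

/-! ### Transducers -/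

structure Transducer (G A : Type) where
  Q : Type
  finQ : Finite Q
  start : Q
  accept : Set Q
  trans : Set (Q × (Option G × Option A) × Q)
  finT : trans.Finite

inductive Transducer.Path {G A : Type} (T : Transducer G A) :
    T.Q → List G → List A → T.Q → Prop
  | refl (q : T.Q) : Transducer.Path T q [] [] q
  | step {q q' qf : T.Q} {g : Option G} {a : Option A} {u : List G} {v : List A} :
      (q, (g, a), q') ∈ T.trans →
      Transducer.Path T q' u v qf →
      Transducer.Path T q (g.toList ++ u) (a.toList ++ v) qf

/-- The relation recognized by a transducer. -/
def Transducer.rel {G A : Type} (T : Transducer G A) (u : List G) (v : List A) : Prop :=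
  ∃ qf ∈ T.accept, T.Path T.start u v qf

/-- `T⁻¹(L)`. -/
def Transducer.invImage {G A : Type} (T : Transducer G A) (L : Language A) : Language G :=
  {u | ∃ v ∈ L, T.rel u v}

/-! ### Regular separability -/

def RegSep {A : Type} (L1 L2 : Language A) : Prop :=
  ∃ R : Language A, R.IsRegular ∧ L1 ≤ R ∧ ∀ w ∈ R, w ∉ L2

/-! ### Linear sets and regular approximations -/

structure LinSet (n : ℕ) where
  base : Fin n → ℤ
  periods : Set (Fin n → ℤ)
  finP : periods.Finite

def LinSet.toSet {n : ℕ} (L : LinSet n) : Set (Fin n → ℤ) :=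
  {x | ∃ p ∈ AddSubmonoid.closure L.periods, x = L.base + p}

def inBox {n : ℕ} (k : ℕ) (x : Fin n → ℤ) : Prop :=
  ∀ j, -(k : ℤ) ≤ x j ∧ x j ≤ (k : ℤ)

/-- Reachability in the ε-NFA underlying the `k`-th regular approximation of `L`:
states are vectors in `[-k,k]^n`, letters move by their effect, ε-transitions
subtract a period. -/
inductive KReach {n : ℕ} (L : LinSet n) (k : ℕ) :
    (Fin n → ℤ) → List (Sig n) → (Fin n → ℤ) → Prop
  | refl (x : Fin n → ℤ) (h : inBox k x) : KReach L k x [] x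
  | letter {x y : Fin n → ℤ} {w : List (Sig n)} (a : Sig n)
      (h : inBox k x) (h' : inBox k (x + letterEff a)) :
      KReach L k (x + letterEff a) w y → KReach L k x (a :: w) y
  | eps {x y : Fin n → ℤ} {w : List (Sig n)} {p : Fin n → ℤ}
      (hp : p ∈ L.periods) (h : inBox k x) (h' : inBox k (x - p)) :
      KReach L k (x - p) w y → KReach L k x w y

/-- The `k`-th regular approximation `K^k(L)`. -/
def KApprox {n : ℕ} (L : LinSet n) (k : ℕ) : Language (Sig n) :=
  {w | ∃ y, KReach L k 0 w y ∧ y ∈ L.toSet}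

/-! ### The `⊕⁺` operation and the families `R_ℓ` -/

def posPlus {n : ℕ} (K L : Set (Fin n → ℤ)) : Set (Fin n → ℤ) :=
  {x | (∀ j, 0 ≤ x j) ∧ ∃ a ∈ K, (∀ j, 0 ≤ a j) ∧ ∃ b ∈ L, x = a + b}

def posFoldAux {n : ℕ} : Set (Fin n → ℤ) → List (Set (Fin n → ℤ)) → Set (Fin n → ℤ)
  | S, [] => S
  | S, L :: Ls => posFoldAux (posPlus S L) Ls

/-- `posFold [L₁, …, L_ℓ] = L₁ ⊕⁺ ⋯ ⊕⁺ L_ℓ` (associated to the left); for `ℓ = 1`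
it is `L₁` itself. -/
def posFold {n : ℕ} : List (Set (Fin n → ℤ)) → Set (Fin n → ℤ)
  | [] => ∅
  | L :: Ls => posFoldAux L Ls

/-- The family `R_ℓ`. -/
def RFam (n ℓ : ℕ) : Set (Language (Sig n)) :=
  {K | ∃ (k : ℕ) (Ls : List (LinSet n)), Ls.length = ℓ ∧
      (0 : Fin n → ℤ) ∉ posFold (Ls.map LinSet.toSet) ∧
      K = (Ls.map (fun L => KApprox L k)).prod}

/-- `R_{≤ m} = ⋃_{1 ≤ i ≤ m} R_i`. -/
def RleFam (n m : ℕ) : Set (Language (Sig n)) :=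
  ⋃ i ∈ Set.Icc 1 m, RFam n i

/-- `R = ⋃_{ℓ ≥ 1} R_ℓ`. -/
def RAll (n : ℕ) : Set (Language (Sig n)) :=
  ⋃ i ∈ Set.Ici 1, RFam n i

/-! ### Basic separator sets -/

def IsBasicSepSet {n : ℕ} (S : Language (Sig n)) (B : Set (Language (Sig n))) : Prop :=
  (∀ K ∈ B, K.IsRegular ∧ ∀ w ∈ K, w ∉ S) ∧
  (∀ L : Language (Sig n), L.IsRegular → (∀ w ∈ L, w ∉ S) →
    ∃ F ⊆ B, F.Finite ∧ ∀ w ∈ L, ∃ K ∈ F, w ∈ K)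

/-! Extra defs for specific statements -/

/-- `u ∼_A v`: the words induce the same state transformation in the DFA `M`. -/
def simEq {α σ : Type} (M : DFA α σ) (u v : List α) : Prop :=
  ∀ p : σ, M.evalFrom p u = M.evalFrom p v

/-- Assemble `w₀ m₁ w₁ ⋯ m_k w_k` over `Σ ⊎ Σ#` (`Sum.inl` = plain, `Sum.inr` = marked). -/
def assemble {α : Type} : List (List α) → List α → List (α ⊕ α)
  | [], _ => []
  | w :: _, [] => w.map Sum.inl
  | w :: ws, m :: ms => w.map Sum.inl ++ Sum.inr m :: assemble ws ms

/-- The set of effects of a language. -/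
def effSet {n : ℕ} (L : Language (Sig n)) : Set (Fin n → ℤ) :=
  {v | ∃ w ∈ L, wordEff w = v}

/-- `Mod(μ, v)`. -/
def ModLang (n μ : ℕ) (v : Fin n → ℤ) : Language (Sig n) :=
  {w | ∀ j, wordEff w j ≡ v j [ZMOD (μ : ℤ)]}

/-- `ModSet(μ, v)`: base `v`, periods `{±μ·e_i}`. -/
def ModSet (n μ : ℕ) (v : Fin n → ℤ) : LinSet n where
  base := v
  periods := (Set.range fun i : Fin n => (μ : ℤ) • Pi.single i (1 : ℤ)) ∪
    (Set.range fun i : Fin n => -((μ : ℤ) • Pi.single i (1 : ℤ)))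
  finP := (Set.finite_range _).union (Set.finite_range _)

/-- `Cov(k, i)`. -/
def CovLang (n k : ℕ) (i : Fin n) : Language (Sig n) :=
  {x | ∃ w w', x = w ++ w' ∧ wordEff w i < 0 ∧
      ∀ u, u <+: w → u ≠ w → 0 ≤ wordEff u i ∧ wordEff u i ≤ (k : ℤ)}

/-- `L_{neg,i}`: base `-e_i`, periods `{±e_j : j ≠ i}`. -/
def LNeg (n : ℕ) (i : Fin n) : LinSet n where
  base := -Pi.single i 1
  periods := ((fun j : Fin n => Pi.single j (1 : ℤ)) '' {j | j ≠ i}) ∪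
    ((fun j : Fin n => -Pi.single j (1 : ℤ)) '' {j | j ≠ i})
  finP := ((Set.toFinite _).image _).union ((Set.toFinite _).image _)

/-- `Z`: base `0`, periods `{±e_j}`. -/
def ZSet (n : ℕ) : LinSet n where
  base := 0
  periods := (Set.range fun j : Fin n => Pi.single j (1 : ℤ)) ∪
    (Set.range fun j : Fin n => -Pi.single j (1 : ℤ))
  finP := (Set.finite_range _).union (Set.finite_range _)

/-! The language `C_ℓ` over `Σ₂` -/

def ltrA1 : Sig 2 := (0, true)
def ltrA2 : Sig 2 := (1, true)
def ltrB1 : Sig 2 := (0, false)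
def ltrB2 : Sig 2 := (1, false)

def fwdWord (j : ℕ) : List (Sig 2) := ltrA1 :: List.replicate j ltrA2
def bwdWord (j : ℕ) : List (Sig 2) := ltrB1 :: List.replicate j ltrB2

def segLang (j : ℕ) : Language (Sig 2) :=
  KStar.kstar ({fwdWord j, bwdWord j} : Language (Sig 2))

def aPlusLang : Language (Sig 2) :=
  {w | ∃ m : ℕ, 0 < m ∧ w = List.replicate m ltrA1}

def CLang (ℓ : ℕ) : Language (Sig 2) :=
  aPlusLang * ((List.range ℓ).map (fun j => segLang (j + 1))).prod


lemma wordEff_cons {n : ℕ} (a : Sig n) (w : List (Sig n)) :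
    wordEff (a :: w) = letterEff a + wordEff w := by
  simp [wordEff]

lemma kreach_eff {n : ℕ} {L : LinSet n} {k : ℕ} {x y : Fin n → ℤ} {w : List (Sig n)}
    (h : KReach L k x w y) :
    ∃ q ∈ AddSubmonoid.closure L.periods, x + wordEff w = y + q := by
  induction h with
  | refl x _ =>
      exact ⟨0, (AddSubmonoid.closure L.periods).zero_mem, by simp [wordEff]⟩
  | letter a _ _ _ ih =>
      obtain ⟨q, hq, he⟩ := ih
      exact ⟨q, hq, by rw [wordEff_cons, ← add_assoc]; exact he⟩
  | @eps x' y' w' p hp _ _ _ ih =>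
      obtain ⟨q, hq, he⟩ := ih
      refine ⟨q + p, (AddSubmonoid.closure L.periods).add_mem hq
        (AddSubmonoid.subset_closure hp), ?_⟩
      calc x' + wordEff w' = (x' - p + wordEff w') + p := by ring
        _ = y' + q + p := by rw [he]
        _ = y' + (q + p) := by ring

theorem stmt6 {n : ℕ} (L : LinSet n) (k : ℕ) (w : List (Sig n))
    (hw : w ∈ KApprox L k) : wordEff w ∈ L.toSet := by
  obtain ⟨y, hr, p, hp, hy⟩ := hw
  obtain ⟨q, hq, he⟩ := kreach_eff hr
  refine ⟨p + q, (AddSubmonoid.closure L.periods).add_mem hp hq, ?_⟩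
  rw [zero_add] at he
  rw [he, hy]; abel
end

section
/- Let ℓ ≥ 1, k ∈ ℕ, and let L_1,…,L_ℓ ⊆ ℤ^n be linear sets with 0 ∉ L_1 ⊕⁺ ⋯ ⊕⁺ L_ℓ. Then the language concatenation K^k(L_1)·K^k(L_2)⋯K^k(L_ℓ) is disjoint from the Dyck language D_n. In particular, every member of R is disjoint from D_n. -/
set_option linter.unusedVariables false

lemma wordEff_nil {n : ℕ} : wordEff ([] : List (Sig n)) = 0 := rfl

lemma wordEff_append {n : ℕ} (u v : List (Sig n)) :
    wordEff (u ++ v) = wordEff u + wordEff v := by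
  simp [wordEff, List.map_append, List.sum_append]

lemma KReach_eff {n : ℕ} {L : LinSet n} {k : ℕ} {x y : Fin n → ℤ} {w : List (Sig n)}
    (h : KReach L k x w y) :
    ∃ q ∈ AddSubmonoid.closure L.periods, y + q = x + wordEff w := by
  induction h with
  | refl x hx => exact ⟨0, zero_mem _, by simp [wordEff_nil]⟩
  | @letter x y w a hx hx' h ih =>
      obtain ⟨q, hq, he⟩ := ih
      refine ⟨q, hq, ?_⟩
      have hw : wordEff (a :: w) = letterEff a + wordEff w := by
        simp [wordEff]
      rw [hw, ← add_assoc]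
      exact he
  | @eps x y w p hp hx hx' h ih =>
      obtain ⟨q, hq, he⟩ := ih
      refine ⟨q + p, add_mem hq (AddSubmonoid.subset_closure hp), ?_⟩
      · rw [← add_assoc, he]
        funext j; simp; ring

lemma KApprox_eff {n : ℕ} {L : LinSet n} {k : ℕ} {w : List (Sig n)}
    (h : w ∈ KApprox L k) : wordEff w ∈ L.toSet := by
  obtain ⟨y, hr, p', hp', hy⟩ := h
  obtain ⟨q, hq, he⟩ := KReach_eff hr
  refine ⟨p' + q, add_mem hp' hq, ?_⟩
  have : wordEff w = y + q := by rw [he]; simp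
  rw [this, hy]; funext j; simp; ring

lemma key_lemma {n : ℕ} (k : ℕ) :
    ∀ (Ls : List (LinSet n)) (S : Set (Fin n → ℤ)) (s : Fin n → ℤ),
      s ∈ S → (∀ j, 0 ≤ s j) →
      ∀ w ∈ (Ls.map (fun L => KApprox L k)).prod,
        (∀ u, u <+: w → ∀ j, 0 ≤ s j + wordEff u j) →
        s + wordEff w ∈ posFoldAux S (Ls.map LinSet.toSet) := by
  intro Ls
  induction Ls with
  | nil =>
      intro S s hs hpos w hw hpre
      simp [Language.mem_one] at hw
      subst hw
      simpa [posFoldAux, wordEff_nil] using hs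
  | cons L Ls ih =>
      intro S s hs hpos w hw hpre
      rw [List.map_cons, List.prod_cons] at hw
      obtain ⟨u, hu, v, hv, rfl⟩ := hw
      have hueff : wordEff u ∈ L.toSet := KApprox_eff hu
      have hs' : ∀ j, 0 ≤ (s + wordEff u) j := by
        intro j
        simpa using hpre u ⟨v, rfl⟩ j
      have hmem : s + wordEff u ∈ posPlus S L.toSet :=
        ⟨hs', s, hs, hpos, wordEff u, hueff, rfl⟩
      have hpre' : ∀ u', u' <+: v → ∀ j, 0 ≤ (s + wordEff u) j + wordEff u' j := by
        intro u' hu' j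
        have := hpre (u ++ u') ⟨hu'.choose, by rw [List.append_assoc, hu'.choose_spec]⟩ j
        simpa [wordEff_append, add_assoc] using this
      have := ih (posPlus S L.toSet) (s + wordEff u) hmem hs' v hv hpre'
      simpa [posFoldAux, wordEff_append, add_assoc] using this

lemma main_disjoint {n : ℕ} (k : ℕ) (Ls : List (LinSet n))
    (hlen : 1 ≤ Ls.length)
    (h0 : (0 : Fin n → ℤ) ∉ posFold (Ls.map LinSet.toSet)) :
    ∀ w ∈ (Ls.map (fun L => KApprox L k)).prod, w ∉ Dyck n := by
  intro w hw hdyck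
  obtain ⟨heff, hpre⟩ := hdyck
  cases Ls with
  | nil => simp at hlen
  | cons L Ls =>
      rw [List.map_cons, List.prod_cons] at hw
      obtain ⟨u, hu, v, hv, rfl⟩ := hw
      have hueff : wordEff u ∈ L.toSet := KApprox_eff hu
      have hpos : ∀ j, 0 ≤ wordEff u j := fun j => hpre u ⟨v, rfl⟩ j
      have hpre' : ∀ u', u' <+: v → ∀ j, 0 ≤ wordEff u j + wordEff u' j := by
        intro u' hu' j
        have := hpre (u ++ u') ⟨hu'.choose, by rw [List.append_assoc, hu'.choose_spec]⟩ j
        simpa [wordEff_append] using this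
      have := key_lemma k Ls L.toSet (wordEff u) hueff hpos v hv hpre'
      rw [wordEff_append] at heff
      rw [heff] at this
      exact h0 (by simpa [posFold, List.map_cons] using this)

theorem stmt7 {n : ℕ} (hn : 1 ≤ n) (ℓ k : ℕ) (hl : 1 ≤ ℓ) (Ls : List (LinSet n))
    (hlen : Ls.length = ℓ)
    (h0 : (0 : Fin n → ℤ) ∉ posFold (Ls.map LinSet.toSet)) :
    (∀ w ∈ (Ls.map (fun L => KApprox L k)).prod, w ∉ Dyck n) ∧
    (∀ K ∈ RAll n, ∀ w ∈ K, w ∉ Dyck n) := by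
  constructor
  · exact main_disjoint k Ls (by omega) h0
  · rintro K hK w hw
    obtain ⟨_, ⟨i, rfl⟩, _, ⟨hi, rfl⟩, k', Ls', hlen', h0', rfl⟩ := hK
    exact main_disjoint k' Ls' (by simp at hi; omega) h0' w hw
end
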